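/- With the notation above (L(n,α), s = 1/(x^n α(x)), w_{k,i} as defined), the pairing of the rescaled elements satisfies: B(s·w_{k,i}, s·w_{ℓ,j}) = −s_{k+ℓ−n+1} if i=j and 0 ≤ k,ℓ ≤ n−1 and k+ℓ ≥ n−1; B(s·w_{k,i}, s·w_{ℓ,j}) = s_{k+ℓ−n+1} if i=j and k,ℓ ≥ n; and B(s·w_{k,i}, s·w_{ℓ,j}) = 0 otherwise, where s(x) = ∑_k s_k x^k. -/

import Mathlib

noncomputable section ManinCore

open scoped BigOperators
open HahnSeries

variable {F : Type} [Field F] {g : Type} [LieRing g] [LieAlgebra F g] {d n : ℕ}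

/-- A Lie ring viewed as a non-unital non-associative semiring with `*` given by the bracket. -/
@[reducible]
def lieMulStruct (g : Type) [LieRing g] : NonUnitalNonAssocSemiring g :=
  { (inferInstance : AddCommMonoid g) with
    mul := fun a b => ⁅a, b⁆
    left_distrib := fun a b c => lie_add a b c
    right_distrib := fun a b c => add_lie a b c
    zero_mul := zero_lie
    mul_zero := lie_zero }

/-- Convolution Lie bracket on `g`-valued formal (Hahn/Laurent) series `g((x))`. -/
def bracketLau (u v : HahnSeries ℤ g) : HahnSeries ℤ g :=
  letI := lieMulStruct g
  u * v

/-- The truncated Lie bracket on `g[x]/x^n g[x]`, represented as `Fin n → g`. -/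
def bracketTr (p q : Fin n → g) : Fin n → g :=
  fun m => ∑ i : Fin n, ∑ j : Fin n, if (i : ℕ) + (j : ℕ) = (m : ℕ) then ⁅p i, q j⁆ else 0

/-- The Lie algebra `L(n,α) = g((x)) × g[x]/x^n g[x]` (as an `F`-module). -/
abbrev LL (g : Type) [AddCommGroup g] (n : ℕ) := HahnSeries ℤ g × (Fin n → g)

/-- Componentwise bracket on `L(n,α)`. -/
def bracketLL (z w : LL g n) : LL g n := (bracketLau z.1 w.1, bracketTr z.2 w.2)

variable (F g n) in
/-- The diagonal `Δ = {(f,[f]) | f ∈ g[[x]]} ⊆ L(n,α)`. -/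
def Delta [Module F g] : Submodule F (LL g n) where
  carrier := {z | (∀ k : ℤ, k < 0 → z.1.coeff k = 0) ∧ ∀ m : Fin n, z.2 m = z.1.coeff (m : ℤ)}
  add_mem' := by
    rintro a b ⟨ha1, ha2⟩ ⟨hb1, hb2⟩
    refine ⟨fun k hk => ?_, fun m => ?_⟩
    · simp [HahnSeries.coeff_add, ha1 k hk, hb1 k hk]
    · simp [HahnSeries.coeff_add, ha2 m, hb2 m]
  zero_mem' := by
    exact ⟨fun k _ => rfl, fun m => rfl⟩
  smul_mem' := by
    rintro c a ⟨ha1, ha2⟩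
    refine ⟨fun k hk => ?_, fun m => ?_⟩
    · simp [HahnSeries.coeff_smul, ha1 k hk]
    · simp [HahnSeries.coeff_smul, ha2 m]

/-- Residue-type bilinear pairing on the Laurent part: `res₀(α·κ(u,v))`. -/
def BLau (κ : g →ₗ[F] g →ₗ[F] F) (α : LaurentSeries F) (u v : HahnSeries ℤ g) : F :=
  ∑ᶠ (i : ℤ) (j : ℤ), α.coeff i * κ (u.coeff j) (v.coeff (-1 - i - j))

/-- Pairing on the truncated part: `res₀(α·κ(p,q))`. -/
def BTr (κ : g →ₗ[F] g →ₗ[F] F) (α : LaurentSeries F) (p q : Fin n → g) : F :=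
  ∑ i : Fin n, ∑ j : Fin n, α.coeff (-1 - (i : ℕ) - (j : ℕ)) * κ (p i) (q j)

/-- The bilinear form `B` on `L(n,α)`: `B((f,p),(g,q)) = res₀(α(fg − pq))` (κ-valued). -/
def BB (κ : g →ₗ[F] g →ₗ[F] F) (α : LaurentSeries F) (z w : LL g n) : F :=
  BLau κ α z.1 w.1 - BTr κ α z.2 w.2

variable (g n) in
/-- The elements `w_{k,i}` from the expansion of `y^nΩ/(x-y)` in `(L(n,α) ⊗ g)[[y]]`. -/
def wElt (b : Fin d → g) (k : ℕ) (i : Fin d) : LL g n :=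
  if k < n then (0, fun m => if (m : ℕ) = n - 1 - k then -(b i) else 0)
  else (HahnSeries.single ((n : ℤ) - 1 - k) (b i), 0)

/-- Multiplication of a `g`-valued Laurent series by a scalar power series. -/
def psSmulLau (s : PowerSeries F) (u : HahnSeries ℤ g) : HahnSeries ℤ g :=
  (HahnModule.of F).symm ((HahnSeries.ofPowerSeries ℤ F s) • (HahnModule.of F u))

/-- Multiplication of a truncated polynomial by a power series. -/
def psSmulTr (s : PowerSeries F) (p : Fin n → g) : Fin n → g :=
  fun m => ∑ j : Fin n, if (j : ℕ) ≤ (m : ℕ) then (PowerSeries.coeff ((m : ℕ) - j)) s • p j else 0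

/-- Componentwise multiplication of an element of `L(n,α)` by a power series. -/
def psSmulLL (s : PowerSeries F) (z : LL g n) : LL g n := (psSmulLau s z.1, psSmulTr s z.2)

/-- The diagonal monomial `b_i(y^k, [y^k]) ∈ Δ ⊆ L(n,α)`. -/
def diagMono (b : Fin d → g) (k : ℕ) (i : Fin d) : LL g n :=
  (HahnSeries.single (k : ℤ) (b i), fun m => if (m : ℕ) = k then b i else 0)

/-- The `g`-valued Hahn series with coefficients `γ : ℕ → g` in nonnegative degrees. -/
def ofNatCoeff (γ : ℕ → g) : HahnSeries ℤ g :=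
  HahnSeries.embDomain Nat.castOrderEmbedding
    ⟨γ, Set.IsWF.isPWO ((wellFounded_lt).wellFoundedOn :
      (Function.support γ).WellFoundedOn (· < ·))⟩

/-- The diagonal element of `L(n,α)` corresponding to a formal power series with
basis coefficients `γ : ℕ → Fin d → F` (i.e. `∑ γ ℓ j • b_j x^ℓ`). -/
def diagOf [Module F g] (b : Fin d → g) (γ : ℕ → Fin d → F) : LL g n :=
  (ofNatCoeff (fun ℓ => ∑ j, γ ℓ j • b j), fun m => ∑ j, γ (m : ℕ) j • b j)

/-!
Because `α s = x⁻ⁿ`, every pairing is a residue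
`res₀(α · xᵃ s · xᵃ' s) = res₀(x^(a+a'-n) s)`, which is the coefficient `s_(n-1-a-a')`.
On the truncated side the cut-off at `xⁿ` is invisible: a product term of degree `≥ n` only
meets coefficients of `α` of degree `< -n`, and these vanish.
-/

namespace HahnSeries

variable {R : Type*} [Semiring R]

theorem support_coeff_mul_coeff_sub_subset (A B : HahnSeries ℤ R) (c : ℤ) :
    Function.support (fun p => A.coeff p * B.coeff (c - p)) ⊆
      ((Finset.antidiagonal A.isPWO_support B.isPWO_support c).image Prod.fst : Set ℤ) := by
  intro p hp
  simp only [Finset.coe_image, Set.mem_image, Finset.mem_coe]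
  exact ⟨(p, c - p), Finset.mem_antidiagonal.mpr
    ⟨left_ne_zero_of_mul hp, right_ne_zero_of_mul hp, add_sub_cancel p c⟩, rfl⟩

theorem finsum_coeff_mul_coeff_sub (A B : HahnSeries ℤ R) (c : ℤ) :
    ∑ᶠ p, A.coeff p * B.coeff (c - p) = (A * B).coeff c := by
  classical
  rw [finsum_eq_sum_of_support_subset _ (support_coeff_mul_coeff_sub_subset A B c),
    Finset.sum_image fun x hx y hy hxy => ?_, coeff_mul]
  · refine Finset.sum_congr rfl fun ij hij => ?_
    rw [← (Finset.mem_antidiagonal.mp hij).2.2, add_sub_cancel_left]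
  · have hx' := (Finset.mem_antidiagonal.mp hx).2.2
    have hy' := (Finset.mem_antidiagonal.mp hy).2.2
    exact Prod.ext hxy (by omega)

theorem finsum_finsum_coeff_mul_coeff_mul_coeff (A B C : HahnSeries ℤ R) (c : ℤ) :
    ∑ᶠ (p : ℤ) (q : ℤ), A.coeff p * B.coeff q * C.coeff (c - p - q)
      = (A * B * C).coeff c := by
  have hinner (p : ℤ) : ∑ᶠ q, A.coeff p * B.coeff q * C.coeff (c - p - q)
      = A.coeff p * (B * C).coeff (c - p) := by
    simp_rw [mul_assoc, sub_sub, ← finsum_coeff_mul_coeff_sub B C, ← sub_sub]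
    exact (mul_finsum' _ _ ((Finset.finite_toSet _).subset
      (support_coeff_mul_coeff_sub_subset B C (c - p)))).symm
  rw [finsum_congr hinner, finsum_coeff_mul_coeff_sub, mul_assoc]

theorem coeff_mul_single_mul_mul_single_mul {R : Type*} [CommRing R] {α S : HahnSeries ℤ R}
    {N : ℤ} (h : α * S = single (-N) 1) (a a' c : ℤ) :
    (α * (single a 1 * S) * (single a' 1 * S)).coeff c = S.coeff (c + N - a - a') := by
  have hprod : α * (single a 1 * S) * (single a' 1 * S) = single (a + a' + -N) 1 * S := by
    calc α * (single a 1 * S) * (single a' 1 * S)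
        = single a (1 : R) * single a' 1 * (α * S) * S := by ring
      _ = single (a + a' + -N) 1 * S := by
          rw [h, single_mul_single, single_mul_single, one_mul, one_mul]
  rw [hprod, coeff_single_mul, one_mul]
  congr 1
  ring

end HahnSeries

theorem coeff_ofPowerSeries_of_neg (s : PowerSeries F) {p : ℤ} (hp : p < 0) :
    (HahnSeries.ofPowerSeries ℤ F s).coeff p = 0 := by
  rw [PowerSeries.coeff_coe, if_pos hp]

theorem coeff_ofPowerSeries_natCast_sub_natCast (s : PowerSeries F) (m k : ℕ) :
    (HahnSeries.ofPowerSeries ℤ F s).coeff ((m : ℤ) - k)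
      = if k ≤ m then PowerSeries.coeff (m - k) s else 0 := by
  split_ifs with h
  · rw [← Nat.cast_sub h, HahnSeries.ofPowerSeries_apply_coeff]
  · exact coeff_ofPowerSeries_of_neg s (by omega)

theorem finsum_eq_sum_fin_of_support_subset {M : Type*} [AddCommMonoid M] {N : ℕ} (f : ℤ → M)
    (h : Function.support f ⊆ Set.Ico 0 (N : ℤ)) :
    ∑ᶠ p, f p = ∑ m : Fin N, f m := by
  classical
  have hsub :
      Function.support f ⊆ (Finset.univ.image fun m : Fin N => ((m : ℕ) : ℤ) : Set ℤ) := by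
    intro p hp
    obtain ⟨h0, hN⟩ := h hp
    simp only [Finset.coe_image, Finset.coe_univ, Set.image_univ, Set.mem_range]
    exact ⟨⟨p.toNat, by omega⟩, by simp [h0]⟩
  rw [finsum_eq_sum_of_support_subset _ hsub,
    Finset.sum_image fun x _ y _ hxy => Fin.ext (by exact_mod_cast hxy)]

theorem coeff_psSmulLau_single (s : PowerSeries F) (a : ℤ) (v : g) (c : ℤ) :
    (psSmulLau s (HahnSeries.single a v)).coeff c
      = (HahnSeries.ofPowerSeries ℤ F s).coeff (c - a) • v := by
  classical
  rw [psSmulLau, HahnModule.coeff_smul_right (Set.isPWO_singleton a)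
    (by simpa using HahnSeries.support_single_subset), Finset.sum_eq_single (c - a, a)]
  · simp
  · rintro ⟨p, q⟩ hpq hne
    rw [Finset.mem_vaddAntidiagonal] at hpq
    obtain ⟨-, hq, hpq⟩ := hpq
    obtain rfl : q = a := hq
    change p + q = c at hpq
    exact (hne (by rw [show p = c - q by omega])).elim
  · intro h
    simp_all [Finset.mem_vaddAntidiagonal]

theorem psSmulLau_zero (s : PowerSeries F) : psSmulLau s (0 : HahnSeries ℤ g) = 0 := by
  ext c
  simp [psSmulLau]

theorem psSmulTr_zero (s : PowerSeries F) : psSmulTr s (0 : Fin n → g) = 0 := by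
  funext m
  simp [psSmulTr]

section zero

variable (κ : g →ₗ[F] g →ₗ[F] F) (α : LaurentSeries F)

theorem BLau_zero_left (v : HahnSeries ℤ g) : BLau κ α 0 v = 0 := by
  simp [BLau]

theorem BLau_zero_right (u : HahnSeries ℤ g) : BLau κ α u 0 = 0 := by
  simp [BLau]

theorem BTr_zero_left (q : Fin n → g) : BTr κ α 0 q = 0 := by
  simp [BTr]

theorem BTr_zero_right (p : Fin n → g) : BTr κ α p 0 = 0 := by
  simp [BTr]

end zero

theorem BLau_psSmulLau_single (κ : g →ₗ[F] g →ₗ[F] F) {α : LaurentSeries F}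
    {s : PowerSeries F} {N : ℤ}
    (hαs : α * HahnSeries.ofPowerSeries ℤ F s = HahnSeries.single (-N) 1)
    (a a' : ℤ) (u v : g) :
    BLau κ α (psSmulLau s (HahnSeries.single a u)) (psSmulLau s (HahnSeries.single a' v))
      = κ u v * (HahnSeries.ofPowerSeries ℤ F s).coeff (N - 1 - a - a') := by
  set S := HahnSeries.ofPowerSeries ℤ F s
  set T := HahnSeries.single a (1 : F) * S
  set T' := HahnSeries.single a' (1 : F) * S
  calc BLau κ α (psSmulLau s (HahnSeries.single a u)) (psSmulLau s (HahnSeries.single a' v))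
      = ∑ᶠ (p : ℤ) (q : ℤ), κ u v * (α.coeff p * T.coeff q * T'.coeff (-1 - p - q)) := by
        simp only [BLau, coeff_psSmulLau_single, map_smul, LinearMap.smul_apply, smul_eq_mul,
          S, T, T', HahnSeries.coeff_single_mul, one_mul]
        refine finsum_congr fun p => finsum_congr fun q => ?_
        ring
    _ = κ u v * (α * T * T').coeff (-1) := by
        simp_rw [← mul_finsum, HahnSeries.finsum_finsum_coeff_mul_coeff_mul_coeff]
    _ = κ u v * S.coeff (N - 1 - a - a') := by
        rw [HahnSeries.coeff_mul_single_mul_mul_single_mul hαs]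
        congr 2
        ring

variable (n) in
def truncSingle (a : ℕ) (u : g) : Fin n → g := fun m => if (m : ℕ) = a then u else 0

theorem psSmulTr_truncSingle_apply (s : PowerSeries F) {a : ℕ} (ha : a < n) (u : g)
    (m : Fin n) :
    psSmulTr s (truncSingle n a u) m
      = (HahnSeries.ofPowerSeries ℤ F s).coeff ((m : ℕ) - (a : ℤ)) • u := by
  rw [psSmulTr, Finset.sum_eq_single ⟨a, ha⟩
    (fun j _ hj => by simp [truncSingle, Fin.val_ne_of_ne hj]) (by simp)]
  rw [coeff_ofPowerSeries_natCast_sub_natCast]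
  split_ifs <;> simp [truncSingle]

theorem BTr_psSmulTr_truncSingle (κ : g →ₗ[F] g →ₗ[F] F) {α : LaurentSeries F}
    {s : PowerSeries F} {N : ℤ} (hαlow : ∀ k : ℤ, k < -(n : ℤ) → α.coeff k = 0)
    (hαs : α * HahnSeries.ofPowerSeries ℤ F s = HahnSeries.single (-N) 1)
    {a a' : ℕ} (ha : a < n) (ha' : a' < n) (u v : g) :
    BTr κ α (psSmulTr s (truncSingle n a u)) (psSmulTr s (truncSingle n a' v))
      = κ u v * (HahnSeries.ofPowerSeries ℤ F s).coeff (N - 1 - a - a') := by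
  set S := HahnSeries.ofPowerSeries ℤ F s
  set T := HahnSeries.single (a : ℤ) (1 : F) * S
  set T' := HahnSeries.single (a' : ℤ) (1 : F) * S
  have hT {c : ℤ} (hc : c < 0) : T.coeff c = 0 ∧ T'.coeff c = 0 := by
    simp only [S, T, T', HahnSeries.coeff_single_mul,
      coeff_ofPowerSeries_of_neg s (by omega : c - a < 0),
      coeff_ofPowerSeries_of_neg s (by omega : c - a' < 0), mul_zero, and_self]
  have hf_support {p q : ℤ} (hpq : T.coeff p * T'.coeff q * α.coeff (-1 - p - q) ≠ 0) :
      0 ≤ p ∧ 0 ≤ q ∧ p + q < n := by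
    refine ⟨?_, ?_, ?_⟩ <;> by_contra! h <;> apply hpq
    · rw [(hT h).1, zero_mul, zero_mul]
    · rw [(hT h).2, mul_zero, zero_mul]
    · rw [hαlow _ (by omega), mul_zero]
  have hfinsum : ∑ᶠ (p : ℤ) (q : ℤ), T.coeff p * T'.coeff q * α.coeff (-1 - p - q)
      = ∑ m : Fin n, ∑ m' : Fin n, T.coeff m * T'.coeff m' * α.coeff (-1 - m - m') := by
    rw [finsum_eq_sum_fin_of_support_subset]
    · refine Finset.sum_congr rfl fun m _ => finsum_eq_sum_fin_of_support_subset _ fun q hq => ?_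
      have := hf_support hq
      exact ⟨this.2.1, by omega⟩
    · intro p hp
      by_contra hp'
      refine hp (finsum_eq_zero_of_forall_eq_zero fun q => by_contra fun hq => hp' ?_)
      have := hf_support hq
      exact ⟨this.1, by omega⟩
  calc BTr κ α (psSmulTr s (truncSingle n a u)) (psSmulTr s (truncSingle n a' v))
      = ∑ m : Fin n, ∑ m' : Fin n,
          κ u v * (T.coeff m * T'.coeff m' * α.coeff (-1 - m - m')) := by
        simp only [BTr, psSmulTr_truncSingle_apply s ha, psSmulTr_truncSingle_apply s ha',
          map_smul, LinearMap.smul_apply, smul_eq_mul, S, T, T', HahnSeries.coeff_single_mul,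
          one_mul]
        refine Finset.sum_congr rfl fun m _ => Finset.sum_congr rfl fun m' _ => ?_
        ring
    _ = κ u v * (α * T * T').coeff (-1) := by
        simp_rw [← Finset.mul_sum, ← hfinsum,
          HahnSeries.finsum_finsum_coeff_mul_coeff_mul_coeff, mul_comm (T * T') α, ← mul_assoc]
    _ = κ u v * S.coeff (N - 1 - a - a') := by
        rw [HahnSeries.coeff_mul_single_mul_mul_single_mul hαs]
        congr 2
        ring

section wElt

variable (b : Fin d → g) {k l : ℕ} (i j : Fin d)

theorem wElt_of_lt (hk : k < n) : wElt g n b k i = (0, truncSingle n (n - 1 - k) (-(b i))) :=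
  if_pos hk

theorem wElt_of_le (hk : n ≤ k) :
    wElt g n b k i = (HahnSeries.single ((n : ℤ) - 1 - k) (b i), 0) :=
  if_neg (Nat.not_lt.mpr hk)

variable (κ : g →ₗ[F] g →ₗ[F] F) {α : LaurentSeries F} {s : PowerSeries F}

theorem BB_psSmulLL_wElt_of_lt_of_lt (hαlow : ∀ k : ℤ, k < -(n : ℤ) → α.coeff k = 0)
    (hαs : α * HahnSeries.ofPowerSeries ℤ F s = HahnSeries.single (-(n : ℤ)) 1)
    (hk : k < n) (hl : l < n) :
    BB κ α (psSmulLL s (wElt g n b k i)) (psSmulLL s (wElt g n b l j))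
      = -(κ (b i) (b j) *
          (HahnSeries.ofPowerSeries ℤ F s).coeff ((k + l + 1 : ℕ) - (n : ℤ))) := by
  rw [wElt_of_lt b i hk, wElt_of_lt b j hl, BB, psSmulLL, psSmulLL, psSmulLau_zero,
    BLau_zero_left, BTr_psSmulTr_truncSingle κ hαlow hαs (by omega) (by omega)]
  simp only [map_neg, LinearMap.neg_apply, neg_neg, zero_sub]
  congr 3
  omega

theorem BB_psSmulLL_wElt_of_le_of_le
    (hαs : α * HahnSeries.ofPowerSeries ℤ F s = HahnSeries.single (-(n : ℤ)) 1)
    (hk : n ≤ k) (hl : n ≤ l) :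
    BB κ α (psSmulLL s (wElt g n b k i)) (psSmulLL s (wElt g n b l j))
      = κ (b i) (b j) *
          (HahnSeries.ofPowerSeries ℤ F s).coeff ((k + l + 1 : ℕ) - (n : ℤ)) := by
  rw [wElt_of_le b i hk, wElt_of_le b j hl, BB, psSmulLL, psSmulLL, psSmulTr_zero,
    BTr_zero_left, BLau_psSmulLau_single κ hαs, sub_zero]
  congr 2
  omega

theorem BB_psSmulLL_wElt_of_lt_of_le (hk : k < n) (hl : n ≤ l) :
    BB κ α (psSmulLL s (wElt g n b k i)) (psSmulLL s (wElt g n b l j)) = 0 := by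
  rw [wElt_of_lt b i hk, wElt_of_le b j hl, BB, psSmulLL, psSmulLL, psSmulLau_zero,
    BLau_zero_left, psSmulTr_zero, BTr_zero_right, sub_zero]

theorem BB_psSmulLL_wElt_of_le_of_lt (hk : n ≤ k) (hl : l < n) :
    BB κ α (psSmulLL s (wElt g n b k i)) (psSmulLL s (wElt g n b l j)) = 0 := by
  rw [wElt_of_le b i hk, wElt_of_lt b j hl, BB, psSmulLL, psSmulLL, psSmulLau_zero,
    BLau_zero_right, psSmulTr_zero, BTr_zero_left, sub_zero]

end wElt

theorem stmt6_general (n : ℕ) (b : Module.Basis (Fin d) F g) (κ : g →ₗ[F] g →ₗ[F] F)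
    (horth : ∀ i j : Fin d, κ (b i) (b j) = if i = j then 1 else 0)
    (α : LaurentSeries F) (s : PowerSeries F)
    (hαlow : ∀ k : ℤ, k < -(n : ℤ) → α.coeff k = 0)
    (hαs : α * HahnSeries.ofPowerSeries ℤ F s = HahnSeries.single (-(n : ℤ)) 1) :
    ∀ (k l : ℕ) (i j : Fin d),
      BB κ α (psSmulLL s (wElt g n (⇑b) k i)) (psSmulLL s (wElt g n (⇑b) l j))
        = if i = j ∧ k < n ∧ l < n ∧ n ≤ k + l + 1
            then -(PowerSeries.coeff (k + l + 1 - n) s)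
          else if i = j ∧ n ≤ k ∧ n ≤ l then PowerSeries.coeff (k + l + 1 - n) s
          else 0 := by
  intro k l i j
  rcases lt_or_ge k n with hk | hk <;> rcases lt_or_ge l n with hl | hl
  · rw [BB_psSmulLL_wElt_of_lt_of_lt b i j κ hαlow hαs hk hl, horth,
      coeff_ofPowerSeries_natCast_sub_natCast]
    split_ifs <;> grind
  · rw [BB_psSmulLL_wElt_of_lt_of_le b i j κ hk hl, if_neg (by omega), if_neg (by omega)]
  · rw [BB_psSmulLL_wElt_of_le_of_lt b i j κ hk hl, if_neg (by omega), if_neg (by omega)]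
  · rw [BB_psSmulLL_wElt_of_le_of_le b i j κ hαs hk hl, horth,
      coeff_ofPowerSeries_natCast_sub_natCast]
    split_ifs <;> grind

/-- With `s = 1/(xⁿα(x)) = ∑ s_k x^k`, the pairings of the rescaled
elements `s·w_{k,i}` are `B(s·w_{k,i}, s·w_{l,j}) = −s_{k+l−n+1}` for `i=j`,
`k,l ≤ n−1`, `k+l ≥ n−1`; `= s_{k+l−n+1}` for `i=j`, `k,l ≥ n`; and `= 0` otherwise. -/
theorem stmt6 (n : ℕ) (b : Module.Basis (Fin d) F g) (κ : g →ₗ[F] g →ₗ[F] F)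
    (hκsymm : ∀ x y : g, κ x y = κ y x)
    (hκinv : ∀ x y z : g, κ ⁅x, y⁆ z = κ x ⁅y, z⁆)
    (horth : ∀ i j : Fin d, κ (b i) (b j) = if i = j then 1 else 0)
    (α : LaurentSeries F) (s : PowerSeries F)
    (hs0 : PowerSeries.constantCoeff s ≠ 0)
    (hαlow : ∀ k : ℤ, k < -(n : ℤ) → α.coeff k = 0)
    (hαs : α * HahnSeries.ofPowerSeries ℤ F s = HahnSeries.single (-(n : ℤ)) 1) :
    ∀ (k l : ℕ) (i j : Fin d),
      BB κ α (psSmulLL s (wElt g n (⇑b) k i)) (psSmulLL s (wElt g n (⇑b) l j))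
        = if i = j ∧ k < n ∧ l < n ∧ n ≤ k + l + 1
            then -(PowerSeries.coeff (k + l + 1 - n) s)
          else if i = j ∧ n ≤ k ∧ n ≤ l then PowerSeries.coeff (k + l + 1 - n) s
          else 0 :=
  stmt6_general n b κ horth α s hαlow hαs

end ManinCore
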